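/- (Part of proof of Theorem 4.) Let L < ∞ and let w : [0,L) → W be a C¹ solution of the combinatorial Yamabe flow with w(0) = 0. Then for each boundary index i, sup_{t ∈ [0,L)} w_i(t) < ∞; that is, no coordinate w_i(t) tends to +∞ in finite time. -/

import Mathlib

/-!
Every arc `θ^i_jk = arcosh ((cosh l_jk + cosh l_ki cosh l_ij) / (sinh l_ki sinh l_ij))` is
nonnegative, because `cosh l_ki cosh l_ij - sinh l_ki sinh l_ij = cosh (l_ki - l_ij) ≥ 1`. Hence
`B ≥ 0` on `W`, the flow is nondecreasing and `w(t) ≥ w(0) = 0`. For `w ≥ 0` we have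
`cosh (l_ki / 2) ≥ cosh (l⁰_ki / 2)`, and `e^{w_j + w_k} ≤ e^{w_k + w_i} e^{w_i + w_j}` gives
`cosh (l_jk / 2) ≤ M cosh (l_ki / 2) cosh (l_ij / 2)` with `M` depending only on `l⁰`; together
they bound each `θ^i_jk` by a constant. So `B_i ≤ K` along the flow and `w_i(t) ≤ K t ≤ K L`.
-/

open Real Filter Set

/-- Inverse hyperbolic cosine. -/
noncomputable def arcosh (x : ℝ) : ℝ := Real.log (x + Real.sqrt (x ^ 2 - 1))

/-- The length of the side of a right-angled hyperbolic hexagon opposite the side of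
length `x`, where the three pairwise non-adjacent sides have lengths `x, y, z`. -/
noncomputable def theta (x y z : ℝ) : ℝ :=
  _root_.arcosh ((Real.cosh x + Real.cosh y * Real.cosh z) / (Real.sinh y * Real.sinh z))

/-- Combinatorial data of an ideally triangulated compact surface with `n` boundary
components, together with a fixed hyperbolic metric `l⁰` assigning a positive length
to each edge.  Boundary components are indexed by `Fin n`; each face is a triple of
pairwise distinct boundary indices; every boundary index occurs in at least one face. -/
structure IdealTriangulatedSurface (n : ℕ) where
  /-- The set of faces (ideal triangles), each recorded by the triple of boundary
  components it meets. -/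
  F : Finset (Fin n × Fin n × Fin n)
  /-- The three boundary indices of a face are pairwise distinct. -/
  distinct : ∀ f ∈ F, f.1 ≠ f.2.1 ∧ f.2.1 ≠ f.2.2 ∧ f.2.2 ≠ f.1
  /-- Every boundary component meets some face. -/
  covers : ∀ i : Fin n, ∃ f ∈ F, i = f.1 ∨ i = f.2.1 ∨ i = f.2.2
  /-- The fixed hyperbolic metric: the length `l⁰_ij > 0` of the edge `ij`. -/
  l0 : Fin n → Fin n → ℝ
  l0_symm : ∀ i j, l0 i j = l0 j i
  l0_pos : ∀ i j, 0 < l0 i j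

namespace IdealTriangulatedSurface

variable {n : ℕ} (S : IdealTriangulatedSurface n)

/-- `i j` is an edge of the ideal triangulation: `i ≠ j` and some face contains
both boundary indices `i` and `j`. -/
def IsEdge (i j : Fin n) : Prop :=
  i ≠ j ∧ ∃ f ∈ S.F, (i = f.1 ∨ i = f.2.1 ∨ i = f.2.2) ∧ (j = f.1 ∨ j = f.2.1 ∨ j = f.2.2)

/-- The space `W` of combinatorial conformal factors: those `w : Fin n → ℝ` with
`w_i + w_j > −log cosh (l⁰_ij / 2)` for every edge `ij`, i.e. those for which every
deformed edge length `l_ij(w)` is defined and positive. -/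
def W : Set (Fin n → ℝ) :=
  {w | ∀ i j : Fin n, S.IsEdge i j →
    -Real.log (Real.cosh (S.l0 i j / 2)) < w i + w j}

/-- The deformed edge length `l_ij(w)`, defined by
`cosh (l_ij(w)/2) = e^{w_i + w_j} cosh (l⁰_ij/2)`. -/
noncomputable def len (w : Fin n → ℝ) (i j : Fin n) : ℝ :=
  2 * _root_.arcosh (Real.exp (w i + w j) * Real.cosh (S.l0 i j / 2))

/-- `θ^i_jk(w)`: the length of the boundary arc on boundary component `i` of the
right-angled hexagon realizing the face `ijk` in the metric determined by `w`. -/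
noncomputable def thetaF (w : Fin n → ℝ) (i j k : Fin n) : ℝ :=
  theta (S.len w j k) (S.len w k i) (S.len w i j)

/-- `B_i(w)`: the length of the boundary component `i`, the sum over all faces
containing `i` of the boundary arc `θ^i` of that face. -/
noncomputable def Blen (w : Fin n → ℝ) (i : Fin n) : ℝ :=
  ∑ f ∈ S.F,
    ((if i = f.1 then S.thetaF w f.1 f.2.1 f.2.2 else 0)
      + (if i = f.2.1 then S.thetaF w f.2.1 f.2.2 f.1 else 0)
      + (if i = f.2.2 then S.thetaF w f.2.2 f.1 f.2.1 else 0))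

end IdealTriangulatedSurface

lemma arcosh_eq_real_arcosh : _root_.arcosh = Real.arcosh := rfl

lemma Convex.monotoneOn_of_hasDerivWithinAt_nonneg {D : Set ℝ} (hD : Convex ℝ D)
    {f f' : ℝ → ℝ} (hf : ∀ x ∈ D, HasDerivWithinAt f (f' x) D x)
    (hf' : ∀ x ∈ interior D, 0 ≤ f' x) : MonotoneOn f D :=
  _root_.monotoneOn_of_hasDerivWithinAt_nonneg hD (fun x hx => (hf x hx).continuousWithinAt)
    (fun x hx => (hf x (interior_subset hx)).mono interior_subset) hf'

lemma sinh_mul_sinh_lt_cosh_add_cosh_mul_cosh (x y z : ℝ) :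
    sinh y * sinh z < cosh x + cosh y * cosh z := by
  have h := Real.one_le_cosh (y - z)
  rw [Real.cosh_sub] at h
  linarith [Real.cosh_pos x]

lemma theta_nonneg {x y z : ℝ} (hy : 0 < y) (hz : 0 < z) : 0 ≤ theta x y z := by
  have hyz : 0 < sinh y * sinh z := mul_pos (Real.sinh_pos_iff.2 hy) (Real.sinh_pos_iff.2 hz)
  exact Real.arcosh_nonneg <|
    (one_le_div hyz).2 (sinh_mul_sinh_lt_cosh_add_cosh_mul_cosh x y z).le

/-- `coth p ≤ coth p₀` whenever `1 < cosh p₀ = B ≤ cosh p`. -/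
lemma cosh_div_sinh_le {p B : ℝ} (hp : 0 < p) (hB : 1 < B) (hBp : B ≤ cosh p) :
    cosh p / sinh p ≤ B / √(B ^ 2 - 1) := by
  have hsp : 0 < sinh p := Real.sinh_pos_iff.2 hp
  have hsB : √(B ^ 2 - 1) ^ 2 = B ^ 2 - 1 := Real.sq_sqrt (by nlinarith)
  have hsB0 : 0 < √(B ^ 2 - 1) := Real.sqrt_pos.2 (by nlinarith)
  rw [div_le_div_iff₀ hsp hsB0, ← pow_le_pow_iff_left₀ (by positivity) (by positivity) two_ne_zero,
    mul_pow, mul_pow, hsB]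
  nlinarith [Real.cosh_sq p]

noncomputable def thetaBound (M B C : ℝ) : ℝ :=
  Real.arcosh ((M ^ 2 / 2 + 1) * (B / √(B ^ 2 - 1)) * (C / √(C ^ 2 - 1)))

/-- With `cosh (2x) = 2 cosh² x - 1` and `sinh (2x) = 2 sinh x cosh x`, the hypothesis on `cosh r`
reduces the ratio defining `θ` to at most `(M² / 2 + 1) coth p coth q`. -/
lemma theta_two_mul_le_thetaBound {r p q M B C : ℝ} (hp : 0 < p) (hq : 0 < q)
    (hB : 1 < B) (hC : 1 < C) (hBp : B ≤ cosh p) (hCq : C ≤ cosh q)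
    (hr : cosh r ≤ M * (cosh p * cosh q)) :
    theta (2 * r) (2 * p) (2 * q) ≤ thetaBound M B C := by
  have hsp : 0 < sinh p := Real.sinh_pos_iff.2 hp
  have hsq : 0 < sinh q := Real.sinh_pos_iff.2 hq
  have hcosh_two_mul (x : ℝ) : cosh (2 * x) = 2 * cosh x ^ 2 - 1 := by
    rw [Real.cosh_two_mul, Real.cosh_sq]; ring
  have hnum : cosh (2 * r) + cosh (2 * p) * cosh (2 * q)
      ≤ (2 * M ^ 2 + 4) * (cosh p ^ 2 * cosh q ^ 2) := by
    have hr2 : cosh r ^ 2 ≤ (M * (cosh p * cosh q)) ^ 2 :=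
      pow_le_pow_left₀ (Real.cosh_pos r).le hr 2
    rw [hcosh_two_mul, hcosh_two_mul, hcosh_two_mul]
    nlinarith [Real.one_le_cosh p, Real.one_le_cosh q]
  have hratio : (cosh (2 * r) + cosh (2 * p) * cosh (2 * q)) / (sinh (2 * p) * sinh (2 * q))
      ≤ (M ^ 2 / 2 + 1) * (cosh p / sinh p) * (cosh q / sinh q) := by
    have hden : 0 < sinh (2 * p) * sinh (2 * q) := by
      rw [Real.sinh_two_mul, Real.sinh_two_mul]; positivity
    calc _ ≤ (2 * M ^ 2 + 4) * (cosh p ^ 2 * cosh q ^ 2) / (sinh (2 * p) * sinh (2 * q)) :=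
          div_le_div_of_nonneg_right hnum hden.le
      _ = (M ^ 2 / 2 + 1) * (cosh p / sinh p) * (cosh q / sinh q) := by
          rw [Real.sinh_two_mul, Real.sinh_two_mul]; field_simp; ring
  have hcoth : (M ^ 2 / 2 + 1) * (cosh p / sinh p) * (cosh q / sinh q)
      ≤ (M ^ 2 / 2 + 1) * (B / √(B ^ 2 - 1)) * (C / √(C ^ 2 - 1)) := by
    gcongr (M ^ 2 / 2 + 1) * ?_ * ?_
    · exact cosh_div_sinh_le hp hB hBp
    · exact cosh_div_sinh_le hq hC hCq
  have hpos : 0 < (cosh (2 * r) + cosh (2 * p) * cosh (2 * q)) / (sinh (2 * p) * sinh (2 * q)) :=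
    zero_lt_one.trans_le <| (one_le_div (by positivity)).2
      (sinh_mul_sinh_lt_cosh_add_cosh_mul_cosh _ _ _).le
  rw [theta, arcosh_eq_real_arcosh, thetaBound,
    Real.arcosh_le_arcosh hpos (hpos.trans_le (hratio.trans hcoth))]
  exact hratio.trans hcoth

namespace IdealTriangulatedSurface

variable {n : ℕ} (S : IdealTriangulatedSurface n)

lemma isEdge_of_mem_F {f : Fin n × Fin n × Fin n} (hf : f ∈ S.F) :
    S.IsEdge f.1 f.2.1 ∧ S.IsEdge f.2.1 f.2.2 ∧ S.IsEdge f.2.2 f.1 := by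
  obtain ⟨h12, h23, h31⟩ := S.distinct f hf
  exact ⟨⟨h12, f, hf, by simp, by simp⟩, ⟨h23, f, hf, by simp, by simp⟩,
    ⟨h31, f, hf, by simp, by simp⟩⟩

noncomputable def cornerSum (g : Fin n → Fin n → Fin n → ℝ) (i : Fin n) : ℝ :=
  ∑ f ∈ S.F,
    ((if i = f.1 then g f.1 f.2.1 f.2.2 else 0)
      + (if i = f.2.1 then g f.2.1 f.2.2 f.1 else 0)
      + (if i = f.2.2 then g f.2.2 f.1 f.2.1 else 0))

lemma Blen_eq_cornerSum (w : Fin n → ℝ) (i : Fin n) : S.Blen w i = S.cornerSum (S.thetaF w) i :=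
  rfl

lemma cornerSum_mono {g h : Fin n → Fin n → Fin n → ℝ}
    (hgh : ∀ i j k, S.IsEdge k i → S.IsEdge i j → g i j k ≤ h i j k) (i : Fin n) :
    S.cornerSum g i ≤ S.cornerSum h i := by
  refine Finset.sum_le_sum fun f hf => ?_
  obtain ⟨h12, h23, h31⟩ := S.isEdge_of_mem_F hf
  have h1 := hgh _ _ _ h31 h12
  have h2 := hgh _ _ _ h12 h23
  have h3 := hgh _ _ _ h23 h31
  split_ifs <;> linarith

lemma cornerSum_zero (i : Fin n) : S.cornerSum (fun _ _ _ => 0) i = 0 := by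
  simp [cornerSum]

variable {S}

lemma one_lt_exp_mul_cosh_of_mem_W {w : Fin n → ℝ} (hw : w ∈ S.W) {i j : Fin n}
    (hij : S.IsEdge i j) : 1 < exp (w i + w j) * cosh (S.l0 i j / 2) := by
  have hc := Real.cosh_pos (S.l0 i j / 2)
  rw [← Real.log_pos_iff (by positivity), Real.log_mul (Real.exp_pos _).ne' hc.ne', Real.log_exp]
  linarith [hw i j hij]

variable (S) in
lemma one_lt_cosh_half_l0 (i j : Fin n) : 1 < cosh (S.l0 i j / 2) :=
  Real.one_lt_cosh.2 (by linarith [S.l0_pos i j])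

lemma cosh_half_l0_le_exp_mul {w : Fin n → ℝ} (hw : 0 ≤ w) (i j : Fin n) :
    cosh (S.l0 i j / 2) ≤ exp (w i + w j) * cosh (S.l0 i j / 2) :=
  le_mul_of_one_le_left (Real.cosh_pos _).le (Real.one_le_exp (add_nonneg (hw i) (hw j)))

lemma one_lt_exp_mul_cosh_of_nonneg {w : Fin n → ℝ} (hw : 0 ≤ w) (i j : Fin n) :
    1 < exp (w i + w j) * cosh (S.l0 i j / 2) :=
  (S.one_lt_cosh_half_l0 i j).trans_le (cosh_half_l0_le_exp_mul hw i j)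

lemma len_pos {w : Fin n → ℝ} {i j : Fin n} (h : 1 < exp (w i + w j) * cosh (S.l0 i j / 2)) :
    0 < S.len w i j :=
  mul_pos two_pos (Real.arcosh_pos h)

lemma thetaF_nonneg {w : Fin n → ℝ} (hw : w ∈ S.W) {i j k : Fin n} (hki : S.IsEdge k i)
    (hij : S.IsEdge i j) : 0 ≤ S.thetaF w i j k :=
  theta_nonneg (len_pos (one_lt_exp_mul_cosh_of_mem_W hw hki))
    (len_pos (one_lt_exp_mul_cosh_of_mem_W hw hij))

variable (S) in
noncomputable def thetaFBound (i j k : Fin n) : ℝ :=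
  thetaBound (cosh (S.l0 j k / 2) / (cosh (S.l0 k i / 2) * cosh (S.l0 i j / 2)))
    (cosh (S.l0 k i / 2)) (cosh (S.l0 i j / 2))

lemma thetaF_le_thetaFBound {w : Fin n → ℝ} (hw : 0 ≤ w) (i j k : Fin n) :
    S.thetaF w i j k ≤ S.thetaFBound i j k := by
  have hb := one_lt_exp_mul_cosh_of_nonneg (S := S) hw k i
  have hc := one_lt_exp_mul_cosh_of_nonneg (S := S) hw i j
  simp only [thetaF, len, arcosh_eq_real_arcosh]
  refine theta_two_mul_le_thetaBound (Real.arcosh_pos hb) (Real.arcosh_pos hc)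
    (S.one_lt_cosh_half_l0 k i) (S.one_lt_cosh_half_l0 i j) ?_ ?_ ?_
  · rw [Real.cosh_arcosh hb.le]
    exact cosh_half_l0_le_exp_mul hw k i
  · rw [Real.cosh_arcosh hc.le]
    exact cosh_half_l0_le_exp_mul hw i j
  · rw [Real.cosh_arcosh (one_lt_exp_mul_cosh_of_nonneg hw j k).le, Real.cosh_arcosh hb.le,
      Real.cosh_arcosh hc.le]
    calc exp (w j + w k) * cosh (S.l0 j k / 2)
        ≤ exp ((w k + w i) + (w i + w j)) * cosh (S.l0 j k / 2) :=
          mul_le_mul_of_nonneg_right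
            (Real.exp_le_exp.2 (by linarith [show (0 : ℝ) ≤ w i from hw i])) (Real.cosh_pos _).le
      _ = _ := by
          rw [Real.exp_add]
          field_simp [(Real.cosh_pos (S.l0 k i / 2)).ne', (Real.cosh_pos (S.l0 i j / 2)).ne']

lemma Blen_nonneg {w : Fin n → ℝ} (hw : w ∈ S.W) (i : Fin n) : 0 ≤ S.Blen w i := by
  rw [Blen_eq_cornerSum, ← S.cornerSum_zero i]
  exact S.cornerSum_mono (fun _ _ _ hki hij => thetaF_nonneg hw hki hij) i

lemma Blen_le {w : Fin n → ℝ} (hw : 0 ≤ w) (i : Fin n) :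
    S.Blen w i ≤ S.cornerSum S.thetaFBound i := by
  rw [Blen_eq_cornerSum]
  exact S.cornerSum_mono (fun j k l _ _ => thetaF_le_thetaFBound hw j k l) i

end IdealTriangulatedSurface

theorem stmt_16_general {n : ℕ} (S : IdealTriangulatedSurface n)
    (L : ℝ) (w : ℝ → (Fin n → ℝ)) (h0 : w 0 = 0)
    (hmem : ∀ t ∈ Set.Ico (0 : ℝ) L, w t ∈ S.W)
    (hflow : ∀ t ∈ Set.Ico (0 : ℝ) L, ∀ i : Fin n,
      HasDerivWithinAt (fun s => w s i) (S.Blen (w t) i) (Set.Ico 0 L) t) :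
    ∀ i : Fin n, ∃ C : ℝ, ∀ t ∈ Set.Ico (0 : ℝ) L, w t i ≤ C := by
  intro i
  set K := S.cornerSum S.thetaFBound i
  have hmono (j : Fin n) : MonotoneOn (fun s => w s j) (Ico 0 L) :=
    (convex_Ico 0 L).monotoneOn_of_hasDerivWithinAt_nonneg (fun t ht => hflow t ht j)
      fun t ht => S.Blen_nonneg (hmem t (interior_subset ht)) j
  have hw_nonneg (t : ℝ) (ht : t ∈ Ico 0 L) : 0 ≤ w t := fun j => by
    simpa [h0] using hmono j ⟨le_rfl, ht.1.trans_lt ht.2⟩ ht ht.1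
  have hlin_mono : MonotoneOn (fun s => K * s - w s i) (Ico 0 L) :=
    (convex_Ico 0 L).monotoneOn_of_hasDerivWithinAt_nonneg
      (fun t ht => ((hasDerivWithinAt_id t _).const_mul K).sub (hflow t ht i))
      fun t ht => by
        simpa using S.Blen_le (hw_nonneg t (interior_subset ht)) i
  refine ⟨K * L, fun t ht => ?_⟩
  have h0mem : (0 : ℝ) ∈ Ico 0 L := ⟨le_rfl, ht.1.trans_lt ht.2⟩
  have hK : 0 ≤ K := (S.Blen_nonneg (hmem 0 h0mem) i).trans (S.Blen_le (hw_nonneg 0 h0mem) i)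
  have hlin : w t i ≤ K * t := by simpa [h0] using hlin_mono h0mem ht ht.1
  exact hlin.trans (mul_le_mul_of_nonneg_left ht.2.le hK)

/-- part of the proof of Theorem 4: for finite `L`, along any `C¹`
solution `w : [0,L) → W` of the combinatorial Yamabe flow with `w(0) = 0`, every
coordinate `w_i` stays bounded above on `[0,L)`: no coordinate blows up to `+∞`
in finite time. -/
theorem stmt_16 {n : ℕ} (hn : 1 ≤ n) (S : IdealTriangulatedSurface n)
    (L : ℝ) (w : ℝ → (Fin n → ℝ)) (h0 : w 0 = 0)
    (hmem : ∀ t ∈ Set.Ico (0 : ℝ) L, w t ∈ S.W)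
    (hflow : ∀ t ∈ Set.Ico (0 : ℝ) L, ∀ i : Fin n,
      HasDerivWithinAt (fun s => w s i) (S.Blen (w t) i) (Set.Ico 0 L) t) :
    ∀ i : Fin n, ∃ C : ℝ, ∀ t ∈ Set.Ico (0 : ℝ) L, w t i ≤ C :=
  stmt_16_general S L w h0 hmem hflow
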